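/- arXiv:2402.18297 — 7 statements merged into one kernel-verified Lean document; each statement's English description precedes it below -/
import Mathlib

section
/- Let n ≥ k > (n+1)/2, H_n = { Σ_{i=0}^{n-1} a_i 4^i : a_i ∈ {0,1} } and I_k = [0, (4^k - 1)/3) ∩ ℤ. Then |H_n + I_k| = 2·((4^k - 1)/3)·2^{n-k}. -/
open Pointwise

def Hcube (n : ℕ) : Set ℤ :=
  {x | ∃ a : ℕ → ℤ, (∀ i, a i = 0 ∨ a i = 1) ∧
    x = ∑ i ∈ Finset.range n, a i * 4 ^ i}

def Iinterval (k : ℕ) : Set ℤ := Set.Ico 0 (((4 : ℤ) ^ k - 1) / 3)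

/-!
Write `n = k + m`, so that `H_n = H_k + 4^k • H_m`. The set `H_k` lies in `[0, M]` with
`M = (4^k - 1)/3` and contains both `0` and `M`, so already `H_k + [0, M) = [0, 2M)`.
Since `2M < 4^k`, division with remainder by `4^k` shows that the translates of `[0, 2M)` by
the points of `4^k • H_m` are pairwise disjoint, whence `|H_n + I_k| = 2M · |H_m| = 2M · 2^m`;
the count `|H_m| = 2^m` follows in the same way from `H_{m+1} = {0, 1} + 4 • H_m`.
-/

theorem Set.ncard_add_image_mul_of_subset_Ico {R S : Set ℤ} {b : ℤ} (hR : R ⊆ Set.Ico 0 b) :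
    (R + (b * ·) '' S).ncard = R.ncard * S.ncard := by
  have hinj : Set.InjOn (fun p : ℤ × ℤ => p.1 + b * p.2) (R ×ˢ S) := by
    rintro ⟨r, s⟩ ⟨hr, -⟩ ⟨r', s'⟩ ⟨hr', -⟩ h
    obtain ⟨hr0, hrb⟩ := hR hr
    obtain ⟨hr0', hrb'⟩ := hR hr'
    have hrr : r = r' := by
      have h := congrArg (· % b) h
      simp only [Int.add_mul_emod_self_left] at h
      rwa [Int.emod_eq_of_lt hr0 hrb, Int.emod_eq_of_lt hr0' hrb'] at h
    subst hrr
    have hb : b ≠ 0 := by omega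
    simpa [hb] using h
  rw [← Set.ncard_prod, ← hinj.ncard_image, ← Set.image2_add, Set.image2_image_right,
    ← Set.image_prod]

theorem Set.add_Ico_eq_Ico_of_subset_Icc {α : Type*} [AddCommGroup α] [LinearOrder α]
    [IsOrderedAddMonoid α] {S : Set α} {M : α} (h0 : 0 ∈ S) (hM : M ∈ S)
    (hS : S ⊆ Set.Icc 0 M) : S + Set.Ico 0 M = Set.Ico 0 (M + M) := by
  ext x
  simp only [Set.mem_add, Set.mem_Ico]
  constructor
  · rintro ⟨s, hs, r, ⟨hr0, hrM⟩, rfl⟩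
    obtain ⟨hs0, hsM⟩ := hS hs
    exact ⟨add_nonneg hs0 hr0, add_lt_add_of_le_of_lt hsM hrM⟩
  · rintro ⟨hx0, hxM⟩
    by_cases hx : x < M
    · exact ⟨0, h0, x, ⟨hx0, hx⟩, zero_add x⟩
    · refine ⟨M, hM, x - M, ⟨sub_nonneg.2 (not_lt.1 hx), ?_⟩, add_sub_cancel M x⟩
      exact sub_lt_iff_lt_add.2 hxM

lemma Hcube_zero : Hcube 0 = {0} := by
  ext x
  simp only [Hcube, Finset.range_zero, Finset.sum_empty, Set.mem_ofPred_eq, Set.mem_singleton_iff]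
  exact ⟨fun ⟨_, _, hx⟩ => hx, fun hx => ⟨0, by simp, hx⟩⟩

lemma Hcube_one : Hcube 1 = {0, 1} := by
  ext x
  simp only [Hcube, Set.mem_ofPred_eq, Finset.sum_range_one, pow_zero, mul_one,
    Set.mem_insert_iff, Set.mem_singleton_iff]
  constructor
  · rintro ⟨a, ha, rfl⟩
    exact ha 0
  · rintro (rfl | rfl)
    · exact ⟨0, by simp⟩
    · exact ⟨1, by simp⟩

lemma Hcube_add (k m : ℕ) : Hcube (k + m) = Hcube k + (4 ^ k * ·) '' Hcube m := by
  ext x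
  simp only [Hcube, Set.mem_add, Set.mem_image, Set.mem_ofPred_eq,
    Finset.sum_range_add, pow_add]
  constructor
  · rintro ⟨a, ha, rfl⟩
    refine ⟨_, ⟨a, ha, rfl⟩, _, ⟨_, ⟨fun j => a (k + j), fun j => ha (k + j), rfl⟩, rfl⟩, ?_⟩
    rw [Finset.mul_sum]
    exact congrArg _ (Finset.sum_congr rfl fun j _ => by ring)
  · rintro ⟨_, ⟨a, ha, rfl⟩, _, ⟨_, ⟨b, hb, rfl⟩, rfl⟩, rfl⟩
    refine ⟨fun i => if i < k then a i else b (i - k), fun i => by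
      dsimp only; split_ifs <;> simp [*], ?_⟩
    rw [Finset.mul_sum]
    congr 1
    · exact Finset.sum_congr rfl fun i hi => by simp [Finset.mem_range.1 hi]
    · exact Finset.sum_congr rfl fun j _ => by simp; ring

lemma Hcube_subset_Icc (n : ℕ) : Hcube n ⊆ Set.Icc 0 (∑ i ∈ Finset.range n, (4 : ℤ) ^ i) := by
  rintro _ ⟨a, ha, rfl⟩
  constructor
  · exact Finset.sum_nonneg fun i _ => by rcases ha i with h | h <;> simp [h]
  · exact Finset.sum_le_sum fun i _ => by rcases ha i with h | h <;> simp [h]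

lemma zero_mem_Hcube (n : ℕ) : 0 ∈ Hcube n := ⟨0, by simp⟩

lemma geom_sum_mem_Hcube (n : ℕ) : ∑ i ∈ Finset.range n, (4 : ℤ) ^ i ∈ Hcube n := ⟨1, by simp⟩

lemma ncard_Hcube (n : ℕ) : (Hcube n).ncard = 2 ^ n := by
  induction n with
  | zero => simp [Hcube_zero]
  | succ n ih =>
    have h01 : ({0, 1} : Set ℤ) ⊆ Set.Ico 0 (4 ^ 1) := by
      rintro _ (rfl | rfl) <;> simp
    rw [add_comm, Hcube_add, Hcube_one, Set.ncard_add_image_mul_of_subset_Ico h01,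
      Set.ncard_pair zero_ne_one, ih]
    ring

theorem stmt_5_general (n k : ℕ) (hkn : k ≤ n) :
    (Hcube n + Iinterval k).ncard = 2 * ((4 ^ k - 1) / 3) * 2 ^ (n - k) := by
  obtain ⟨m, rfl⟩ := Nat.exists_eq_add_of_le hkn
  set N := (4 ^ k - 1) / 3
  have hN : ∑ i ∈ Finset.range k, (4 : ℤ) ^ i = N := by
    exact_mod_cast Nat.geomSum_eq (by norm_num) k
  have hN3 : (N : ℤ) * 3 = 4 ^ k - 1 := by
    rw [← hN, ← geom_sum_mul]; norm_num
  have hI : Iinterval k = Set.Ico 0 (N : ℤ) := by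
    rw [Iinterval, ← hN3, Int.mul_ediv_cancel _ (by norm_num)]
  have hlow : Hcube k + Iinterval k = Set.Ico 0 (N + N : ℤ) := by
    rw [hI, ← hN]
    exact Set.add_Ico_eq_Ico_of_subset_Icc (zero_mem_Hcube k) (geom_sum_mem_Hcube k)
      (Hcube_subset_Icc k)
  have hsub : Set.Ico 0 (N + N : ℤ) ⊆ Set.Ico 0 (4 ^ k) :=
    Set.Ico_subset_Ico_right (by omega)
  have hcard : (Set.Ico 0 (N + N : ℤ)).ncard = 2 * N := by
    rw [← Finset.coe_Ico, Set.ncard_coe_finset, Int.card_Ico, sub_zero, ← Nat.cast_add,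
      Int.toNat_natCast, two_mul]
  rw [Hcube_add, add_right_comm, hlow, Set.ncard_add_image_mul_of_subset_Ico hsub, hcard,
    ncard_Hcube, Nat.add_sub_cancel_left]

theorem stmt_5 (n k : ℕ) (hkn : k ≤ n) (hk : n + 1 < 2 * k) :
    (Hcube n + Iinterval k).ncard = 2 * ((4 ^ k - 1) / 3) * 2 ^ (n - k) :=
  stmt_5_general n k hkn
end

section
/- If A and B are finite subsets of the hypercube {0,1}^n ⊆ ℤ^n, then |A + B| ≥ (|A|·|B|)^{log 3 / log 4}. -/
/-!
Induct on `n`, splitting `A` and `B` by their first coordinate into `A₀ ∪ A₁` and `B₀ ∪ B₁`.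
The first coordinates of `A + B` take the values `0`, `1`, `2`, and these three layers contain
`A₀ + B₀`, both `A₀ + B₁` and `A₁ + B₀`, and `A₁ + B₁` respectively. With `c = log 3 / log 4`,
induction reduces the theorem to
  `((a₀ + a₁)(b₀ + b₁))^c ≤ (a₀b₀)^c + max ((a₀b₁)^c) ((a₁b₀)^c) + (a₁b₁)^c`,
which after normalisation reads `((1 + p)(1 + q))^c ≤ 1 + q^c + (pq)^c` for `0 ≤ p ≤ q`.
As functions of `u = p^c` the left side is convex (Minkowski's inequality in `ℓ^(1/c)`) and the
right side is affine, so only `p = 0` (subadditivity of `t ↦ t^c`) and `p = q` need checking.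
Writing `q = e^(2v)` and `s = 2c = log₂ 3`, the case `p = q` becomes
`(2 cosh v)^s ≤ 1 + 2 cosh (s v)`: the difference of the logarithms of both sides vanishes at
`v = 0` (because `2^s = 3`) and as `v → ∞`, and its derivative changes sign at most once, from
`+` to `-`.
-/

open Pointwise

namespace HypercubeSumset

section Analysis

open Set Filter Topology Real

theorem one_lt_of_two_rpow_eq_three {s : ℝ} (hs : (2 : ℝ) ^ s = 3) : 1 < s := by
  rw [← rpow_lt_rpow_left_iff one_lt_two, hs, rpow_one]; norm_num

theorem lt_two_of_two_rpow_eq_three {s : ℝ} (hs : (2 : ℝ) ^ s = 3) : s < 2 := by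
  rw [← rpow_lt_rpow_left_iff one_lt_two, hs]; norm_num

theorem monotoneOn_or_antitoneOn_of_deriv {f f' : ℝ → ℝ} {D : Set ℝ} (hD : Convex ℝ D)
    (hf : ContinuousOn f D) (hf' : ∀ x ∈ interior D, HasDerivAt f (f' x) x)
    (hsign : ∀ x ∈ interior D, ∀ y ∈ interior D, x ≤ y → f' x < 0 → f' y ≤ 0) (x : ℝ) :
    MonotoneOn f (D ∩ Iic x) ∨ AntitoneOn f (D ∩ Ici x) := by
  have hdiff (E : Set ℝ) (hE : interior E ⊆ interior D) : DifferentiableOn ℝ f (interior E) :=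
    fun y hy => (hf' y (hE hy)).differentiableAt.differentiableWithinAt
  by_cases h : ∀ y ∈ interior D, y < x → 0 ≤ f' y
  · left
    refine monotoneOn_of_deriv_nonneg (hD.inter (convex_Iic x)) (hf.mono inter_subset_left)
      (hdiff _ (interior_mono inter_subset_left)) fun y hy => ?_
    rw [interior_inter, interior_Iic] at hy
    rw [(hf' y hy.1).deriv]
    exact h y hy.1 hy.2
  · right
    push Not at h
    obtain ⟨y, hy, hyx, hneg⟩ := h
    refine antitoneOn_of_deriv_nonpos (hD.inter (convex_Ici x)) (hf.mono inter_subset_left)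
      (hdiff _ (interior_mono inter_subset_left)) fun z hz => ?_
    rw [interior_inter, interior_Ici] at hz
    rw [(hf' z hz.1).deriv]
    exact hsign y hy z hz.1 (hyx.trans hz.2).le hneg

theorem mul_sinh_mul_cosh_mul_le {a v : ℝ} (ha0 : 0 ≤ a) (ha1 : a ≤ 1) (hv : 0 ≤ v) :
    a * sinh v * cosh (a * v) ≤ cosh v * sinh (a * v) := by
  let g v := cosh v * sinh (a * v) - a * sinh v * cosh (a * v)
  have hg' (x : ℝ) : HasDerivAt g ((1 - a ^ 2) * (sinh x * sinh (a * x))) x := by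
    have hlin : HasDerivAt (fun v => a * v) a x := by simpa using (hasDerivAt_id x).const_mul a
    exact (((hasDerivAt_cosh x).mul hlin.sinh).sub
      (((hasDerivAt_sinh x).const_mul a).mul hlin.cosh)).congr_deriv (by ring)
  have hmono : MonotoneOn g (Ici 0) :=
    monotoneOn_of_deriv_nonneg (convex_Ici 0) (by fun_prop)
      (fun x _ => (hg' x).differentiableAt.differentiableWithinAt) fun x hx => by
        rw [interior_Ici] at hx
        rw [(hg' x).deriv]
        have : a ^ 2 ≤ 1 := by nlinarith
        have := sinh_pos_iff.2 (mem_Ioi.1 hx)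
        have := sinh_nonneg_iff.2 (mul_nonneg ha0 hx.le)
        positivity
  have := hmono self_mem_Ici hv hv
  simp only [g, mul_zero, sinh_zero, cosh_zero] at this
  linarith

theorem monotoneOn_sinh_div_sinh_mul {a : ℝ} (ha0 : 0 < a) (ha1 : a ≤ 1) :
    MonotoneOn (fun v => sinh v / sinh (a * v)) (Ioi 0) := by
  have hpos {x : ℝ} (hx : x ∈ Ioi 0) : sinh (a * x) ≠ 0 :=
    (sinh_pos_iff.2 (mul_pos ha0 hx)).ne'
  have hlin (x : ℝ) : HasDerivAt (fun v => a * v) a x := by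
    simpa using (hasDerivAt_id x).const_mul a
  have hd (x : ℝ) (hx : x ∈ Ioi 0) : HasDerivAt (fun v => sinh v / sinh (a * v))
      ((cosh x * sinh (a * x) - sinh x * (cosh (a * x) * a)) / sinh (a * x) ^ 2) x :=
    (hasDerivAt_sinh x).div (hlin x).sinh (hpos hx)
  refine monotoneOn_of_deriv_nonneg (convex_Ioi 0)
    (fun x hx => (hd x hx).continuousAt.continuousWithinAt)
    (fun x hx => (hd x (interior_subset hx)).differentiableAt.differentiableWithinAt)
    fun x hx => ?_
  rw [interior_Ioi] at hx
  rw [(hd x hx).deriv]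
  have := mul_sinh_mul_cosh_mul_le ha0.le ha1 hx.le
  apply div_nonneg _ (sq_nonneg _)
  nlinarith

noncomputable def logCoshGap (s v : ℝ) : ℝ :=
  log (1 + 2 * cosh (s * v)) - s * log (2 * cosh v)

theorem hasDerivAt_logCoshGap (s v : ℝ) :
    HasDerivAt (logCoshGap s)
      (s * (2 * sinh ((s - 1) * v) - sinh v) / ((1 + 2 * cosh (s * v)) * cosh v)) v := by
  have hlin : HasDerivAt (fun v => s * v) s v := by simpa using (hasDerivAt_id v).const_mul s
  have h1 : 0 < 1 + 2 * cosh (s * v) := by positivity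
  have h2 := cosh_pos v
  refine ((((hlin.cosh.const_mul 2).const_add 1).log h1.ne').sub
    ((((hasDerivAt_cosh v).const_mul 2).log (by positivity)).const_mul s)).congr_deriv ?_
  rw [sub_one_mul, sinh_sub]
  field_simp
  ring

theorem logCoshGap_eq (s v : ℝ) :
    logCoshGap s v =
      log (1 + exp (-(s * v)) + exp (-(s * v)) ^ 2) - s * log (1 + exp (-v) ^ 2) := by
  have h1 :
      1 + 2 * cosh (s * v) = exp (s * v) * (1 + exp (-(s * v)) + exp (-(s * v)) ^ 2) := by
    rw [cosh_eq, exp_neg]; field_simp; ring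
  have h2 : 2 * cosh v = exp v * (1 + exp (-v) ^ 2) := by
    rw [cosh_eq, exp_neg]; field_simp
  rw [logCoshGap, h1, h2, log_mul (exp_pos _).ne' (by positivity),
    log_mul (exp_pos _).ne' (by positivity), log_exp, log_exp]
  ring

theorem tendsto_logCoshGap_atTop {s : ℝ} (hs : 0 < s) :
    Tendsto (logCoshGap s) atTop (𝓝 0) := by
  have h1 : Tendsto (fun v => exp (-(s * v))) atTop (𝓝 0) :=
    tendsto_exp_neg_atTop_nhds_zero.comp (tendsto_id.const_mul_atTop hs)
  have h2 : Tendsto (fun v => exp (-v)) atTop (𝓝 0) := tendsto_exp_neg_atTop_nhds_zero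
  have := ((((tendsto_const_nhds (x := (1 : ℝ))).add h1).add (h1.pow 2)).log
    (by norm_num)).sub
      ((((tendsto_const_nhds (x := (1 : ℝ))).add (h2.pow 2)).log (by norm_num)).const_mul s)
  rw [tendsto_congr (logCoshGap_eq s)]
  simpa using this

theorem logCoshGap_nonneg {s v : ℝ} (hs : (2 : ℝ) ^ s = 3) (hv : 0 ≤ v) :
    0 ≤ logCoshGap s v := by
  have hs1 := one_lt_of_two_rpow_eq_three hs
  have hs2 := lt_two_of_two_rpow_eq_three hs
  have hzero : logCoshGap s 0 = 0 := by
    simp [logCoshGap, ← log_rpow two_pos, hs]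
    norm_num
  -- the derivative has the sign of `2 sinh ((s - 1) x) - sinh x`, and `sinh x / sinh ((s - 1) x)`
  -- increases, so once negative the derivative stays nonpositive
  have hsign : ∀ x ∈ interior (Ici (0 : ℝ)), ∀ y ∈ interior (Ici (0 : ℝ)), x ≤ y →
      deriv (logCoshGap s) x < 0 → deriv (logCoshGap s) y ≤ 0 := by
    intro x hx y hy hxy hneg
    rw [interior_Ici] at hx hy
    rw [(hasDerivAt_logCoshGap s x).deriv] at hneg
    rw [(hasDerivAt_logCoshGap s y).deriv]
    have hD (z : ℝ) : 0 < (1 + 2 * cosh (s * z)) * cosh z := by positivity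
    have hx' : 2 * sinh ((s - 1) * x) < sinh x := by
      by_contra! h
      exact hneg.not_ge (div_nonneg (mul_nonneg (by linarith) (by linarith)) (hD x).le)
    have hsx := sinh_pos_iff.2 (mul_pos (by linarith : 0 < s - 1) (mem_Ioi.1 hx))
    have hsy := sinh_pos_iff.2 (mul_pos (by linarith : 0 < s - 1) (mem_Ioi.1 hy))
    have hy' : 2 * sinh ((s - 1) * y) ≤ sinh y := by
      rw [← le_div_iff₀ hsy]
      exact (le_div_iff₀ hsx |>.2 hx'.le).trans
        (monotoneOn_sinh_div_sinh_mul (by linarith) (by linarith) hx hy hxy)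
    exact div_nonpos_of_nonpos_of_nonneg
      (mul_nonpos_of_nonneg_of_nonpos (by linarith) (by linarith)) (hD y).le
  rcases monotoneOn_or_antitoneOn_of_deriv (convex_Ici 0)
      (fun x _ => (hasDerivAt_logCoshGap s x).continuousAt.continuousWithinAt)
      (fun x _ => (hasDerivAt_logCoshGap s x).differentiableAt.hasDerivAt) hsign v
    with hmono | hanti
  · simpa [hzero] using hmono ⟨mem_Ici.2 le_rfl, hv⟩ ⟨hv, mem_Iic.2 le_rfl⟩ hv
  · refine le_of_tendsto (tendsto_logCoshGap_atTop (s := s) (by linarith)) ?_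
    exact eventually_atTop.2
      ⟨v, fun t ht => hanti ⟨hv, mem_Ici.2 le_rfl⟩ ⟨hv.trans ht, ht⟩ ht⟩

theorem two_mul_cosh_rpow_le {s : ℝ} (hs : (2 : ℝ) ^ s = 3) (v : ℝ) :
    (2 * cosh v) ^ s ≤ 1 + 2 * cosh (s * v) := by
  have hs0 : 0 < s := zero_lt_one.trans (one_lt_of_two_rpow_eq_three hs)
  have h := logCoshGap_nonneg hs (abs_nonneg v)
  rw [logCoshGap, cosh_abs, ← abs_of_pos hs0, ← abs_mul, cosh_abs, abs_of_pos hs0] at h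
  rw [← log_le_log_iff (by positivity) (by positivity), log_rpow (by positivity)]
  linarith

theorem two_rpow_two_mul_eq_three {c : ℝ} (hc : (4 : ℝ) ^ c = 3) : (2 : ℝ) ^ (2 * c) = 3 := by
  rw [rpow_mul zero_le_two]; norm_num [hc]

theorem one_add_rpow_two_mul_le {c q : ℝ} (hc : (4 : ℝ) ^ c = 3) (hq : 0 < q) :
    (1 + q) ^ (2 * c) ≤ 1 + q ^ c + q ^ (2 * c) := by
  obtain ⟨v, hv⟩ : ∃ v, log q = 2 * v := ⟨log q / 2, by ring⟩
  have hsq : exp v * exp v = q := by rw [← exp_add, ← two_mul, ← hv, exp_log hq]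
  have hone (x : ℝ) : exp x * exp (-x) = 1 := by rw [← exp_add, add_neg_cancel, exp_zero]
  have hq' : 1 + q = exp v * (2 * cosh v) := by
    rw [cosh_eq]; linear_combination -hsq - hone v
  have hqc : q ^ c = exp (2 * c * v) := by rw [rpow_def_of_pos hq, hv]; ring_nf
  have hq2c : q ^ (2 * c) = exp (2 * c * v) * exp (2 * c * v) := by
    rw [rpow_def_of_pos hq, ← exp_add, hv]; ring_nf
  calc (1 + q) ^ (2 * c) = exp (2 * c * v) * (2 * cosh v) ^ (2 * c) := by
        rw [hq', mul_rpow (exp_pos v).le (by positivity), ← exp_mul, mul_comm v]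
    _ ≤ exp (2 * c * v) * (1 + 2 * cosh (2 * c * v)) := by
        gcongr; exact two_mul_cosh_rpow_le (two_rpow_two_mul_eq_three hc) v
    _ = 1 + q ^ c + q ^ (2 * c) := by
        rw [hqc, hq2c, cosh_eq]; linear_combination hone (2 * c * v)

theorem convexOn_one_add_rpow_inv_rpow {c : ℝ} (hc0 : 0 < c) (hc1 : c ≤ 1) :
    ConvexOn ℝ (Ici 0) fun u : ℝ => (1 + u ^ c⁻¹) ^ c := by
  refine ⟨convex_Ici 0, fun u hu w hw a b ha hb hab => ?_⟩
  have hr : 1 ≤ c⁻¹ := one_le_inv₀ hc0 |>.2 hc1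
  have hmink := Lp_add_le_of_nonneg (s := Finset.univ) (f := ![a, a * u])
    (g := ![b, b * w]) hr (by simp [Fin.forall_fin_two, ha, mul_nonneg ha (mem_Ici.1 hu)])
    (by simp [Fin.forall_fin_two, hb, mul_nonneg hb (mem_Ici.1 hw)])
  have hnorm {t x : ℝ} (ht : 0 ≤ t) (hx : 0 ≤ x) :
      (t ^ c⁻¹ + (t * x) ^ c⁻¹) ^ (1 / c⁻¹) = t * (1 + x ^ c⁻¹) ^ c := by
    rw [mul_rpow ht hx, ← mul_one_add, mul_rpow, ← rpow_mul ht, one_div, inv_inv,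
      inv_mul_cancel₀ hc0.ne', rpow_one]
    · positivity
    · positivity
  simp only [Fin.sum_univ_two, Matrix.cons_val_zero, Matrix.cons_val_one] at hmink
  rw [hnorm ha (mem_Ici.1 hu), hnorm hb (mem_Ici.1 hw), hab, one_rpow,
    one_div, inv_inv] at hmink
  simpa only [smul_eq_mul] using hmink

theorem pos_and_le_one_of_four_rpow_eq_three {c : ℝ} (hc : (4 : ℝ) ^ c = 3) :
    0 < c ∧ c ≤ 1 := by
  have h1 := one_lt_of_two_rpow_eq_three (two_rpow_two_mul_eq_three hc)
  have h2 := lt_two_of_two_rpow_eq_three (two_rpow_two_mul_eq_three hc)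
  constructor <;> linarith

theorem one_add_mul_one_add_rpow_le {c p q : ℝ} (hc : (4 : ℝ) ^ c = 3) (hp : 0 ≤ p)
    (hpq : p ≤ q) : ((1 + p) * (1 + q)) ^ c ≤ 1 + q ^ c + (p * q) ^ c := by
  obtain ⟨hc0, hc1⟩ := pos_and_le_one_of_four_rpow_eq_three hc
  rcases (hp.trans hpq).eq_or_lt with rfl | hq
  · obtain rfl : p = 0 := le_antisymm hpq hp
    simp [zero_rpow hc0.ne']
  set t := (p / q) ^ c
  have ht0 : 0 ≤ t := by positivity
  have ht1 : t ≤ 1 := rpow_le_one (by positivity) ((div_le_one hq).2 hpq) hc0.le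
  have htq : t * q ^ c = p ^ c := by
    rw [← mul_rpow (by positivity) hq.le, div_mul_cancel₀ _ hq.ne']
  have hinv {x : ℝ} (hx : 0 ≤ x) : (x ^ c) ^ c⁻¹ = x := by
    rw [← rpow_mul hx, mul_inv_cancel₀ hc0.ne', rpow_one]
  -- convexity between `u = 0` and `u = q ^ c`, evaluated at `u = t * q ^ c = p ^ c`
  have hconv := (convexOn_one_add_rpow_inv_rpow hc0 hc1).2 self_mem_Ici
    (mem_Ici.2 (rpow_nonneg hq.le c)) (sub_nonneg.2 ht1) ht0 (sub_add_cancel 1 t)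
  simp only [smul_eq_mul, mul_zero, zero_add, htq, hinv hp, hinv hq.le,
    zero_rpow (inv_ne_zero hc0.ne'), add_zero, one_rpow, mul_one] at hconv
  have hsub : (1 + q) ^ c ≤ 1 + q ^ c := by
    simpa using rpow_add_le_add_rpow zero_le_one hq.le hc0.le hc1
  have hsq (x : ℝ) (hx : 0 ≤ x) : x ^ c * x ^ c = x ^ (2 * c) := by
    rw [← rpow_add' hx (by positivity), two_mul]
  calc ((1 + p) * (1 + q)) ^ c = (1 + p) ^ c * (1 + q) ^ c :=
        mul_rpow (by positivity) (by positivity)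
    _ ≤ (1 - t + t * (1 + q) ^ c) * (1 + q) ^ c := by gcongr
    _ = (1 - t) * (1 + q) ^ c + t * (1 + q) ^ (2 * c) := by rw [← hsq _ (by positivity)]; ring
    _ ≤ (1 - t) * (1 + q ^ c) + t * (1 + q ^ c + q ^ (2 * c)) := by
        gcongr
        exact one_add_rpow_two_mul_le hc hq
    _ = 1 + q ^ c + (p * q) ^ c := by
        rw [mul_rpow hp hq.le, ← htq, ← hsq _ hq.le]; ring

theorem add_mul_add_rpow_le {c a₀ a₁ b₀ b₁ : ℝ} (hc : (4 : ℝ) ^ c = 3) (ha₀ : 0 ≤ a₀)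
    (ha₁ : 0 ≤ a₁) (hb₀ : 0 ≤ b₀) (hb₁ : 0 ≤ b₁) (h : a₁ * b₀ ≤ a₀ * b₁) :
    ((a₀ + a₁) * (b₀ + b₁)) ^ c ≤ (a₀ * b₀) ^ c + (a₀ * b₁) ^ c + (a₁ * b₁) ^ c := by
  obtain ⟨hc0, hc1⟩ := pos_and_le_one_of_four_rpow_eq_three hc
  rcases ha₀.eq_or_lt with rfl | ha₀
  · have : a₁ * b₀ = 0 := le_antisymm (by simpa using h) (by positivity)
    simp [zero_rpow hc0.ne', mul_add, this]
  rcases hb₀.eq_or_lt with rfl | hb₀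
  · simpa [zero_rpow hc0.ne', add_mul] using
      rpow_add_le_add_rpow (mul_nonneg ha₀.le hb₁) (mul_nonneg ha₁ hb₁) hc0.le hc1
  have hpq : a₁ / a₀ ≤ b₁ / b₀ := by rwa [div_le_div_iff₀ ha₀ hb₀, mul_comm b₁]
  have hab : 0 ≤ a₀ * b₀ := by positivity
  calc ((a₀ + a₁) * (b₀ + b₁)) ^ c
      = (a₀ * b₀) ^ c * ((1 + a₁ / a₀) * (1 + b₁ / b₀)) ^ c := by
        rw [← mul_rpow hab (by positivity)]; congr 1; field_simp
    _ ≤ (a₀ * b₀) ^ c * (1 + (b₁ / b₀) ^ c + (a₁ / a₀ * (b₁ / b₀)) ^ c) := by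
        gcongr; exact one_add_mul_one_add_rpow_le hc (by positivity) hpq
    _ = (a₀ * b₀) ^ c + (a₀ * b₁) ^ c + (a₁ * b₁) ^ c := by
        have e₁ : a₀ * b₀ * (b₁ / b₀) = a₀ * b₁ := by field_simp
        have e₂ : a₀ * b₀ * (a₁ / a₀ * (b₁ / b₀)) = a₁ * b₁ := by field_simp
        rw [mul_add, mul_add, mul_one, ← mul_rpow hab (by positivity),
          ← mul_rpow hab (by positivity), e₁, e₂]

theorem add_mul_add_rpow_le_add_max_add {c a₀ a₁ b₀ b₁ : ℝ} (hc : (4 : ℝ) ^ c = 3)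
    (ha₀ : 0 ≤ a₀) (ha₁ : 0 ≤ a₁) (hb₀ : 0 ≤ b₀) (hb₁ : 0 ≤ b₁) :
    ((a₀ + a₁) * (b₀ + b₁)) ^ c ≤
      (a₀ * b₀) ^ c + max ((a₀ * b₁) ^ c) ((a₁ * b₀) ^ c) + (a₁ * b₁) ^ c := by
  rcases le_total (a₁ * b₀) (a₀ * b₁) with h | h
  · refine (add_mul_add_rpow_le hc ha₀ ha₁ hb₀ hb₁ h).trans ?_
    gcongr
    exact le_max_left _ _
  · have := add_mul_add_rpow_le hc hb₀ hb₁ ha₀ ha₁ (by rwa [mul_comm b₁, mul_comm b₀])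
    rw [mul_comm (b₀ + b₁), mul_comm b₀ a₀, mul_comm b₀ a₁, mul_comm b₁ a₁] at this
    refine this.trans ?_
    gcongr
    exact le_max_right _ _

theorem natCast_rpow_le_self {c : ℝ} (hc0 : 0 < c) (hc1 : c ≤ 1) (m : ℕ) :
    (m : ℝ) ^ c ≤ m := by
  rcases m.eq_zero_or_pos with rfl | hm
  · simp [zero_rpow hc0.ne']
  · exact rpow_le_self_of_one_le (by exact_mod_cast hm) hc1

end Analysis

section Slices

open Finset

variable {α : Type*} {n : ℕ}

noncomputable def slice (A : Finset (Fin (n + 1) → α)) (k : α) : Finset (Fin n → α) :=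
  A.preimage (fun x : Fin n → α => (Fin.cons k x : Fin (n + 1) → α))
    (Fin.cons_right_injective (α := fun _ => α) k).injOn

@[simp]
theorem mem_slice {A : Finset (Fin (n + 1) → α)} {k : α} {x : Fin n → α} :
    x ∈ slice A k ↔ Fin.cons k x ∈ A :=
  mem_preimage

theorem card_slice [DecidableEq α] (A : Finset (Fin (n + 1) → α)) (k : α) :
    #(slice A k) = #{x ∈ A | x 0 = k} := by
  rw [← card_image_of_injective _ (Fin.cons_right_injective (α := fun _ => α) k)]
  congr 1
  ext x
  simp only [mem_image, mem_slice, mem_filter]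
  constructor
  · rintro ⟨y, hy, rfl⟩
    exact ⟨hy, rfl⟩
  · rintro ⟨hx, rfl⟩
    exact ⟨Fin.tail x, by rwa [Fin.cons_self_tail], Fin.cons_self_tail x⟩

theorem card_eq_card_slice_add_card_slice [DecidableEq α] {A : Finset (Fin (n + 1) → α)}
    {k l : α} (hkl : k ≠ l) (hA : ∀ x ∈ A, x 0 = k ∨ x 0 = l) : #A = #(slice A k) + #(slice A l) := by
  rw [card_slice, card_slice, ← card_filter_add_card_filter_not (fun x => x 0 = k)]
  congr 1
  refine congrArg card (filter_congr fun x hx => ?_)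
  rcases hA x hx with h | h <;> simp [h, hkl, hkl.symm]

theorem sum_card_slice_le [DecidableEq α] (A : Finset (Fin (n + 1) → α)) (K : Finset α) :
    ∑ k ∈ K, #(slice A k) ≤ #A := by
  simp only [card_slice]
  rw [sum_card_fiberwise_eq_card_filter]
  exact card_filter_le _ _

theorem slice_add_slice_subset [DecidableEq α] [Add α] (A B : Finset (Fin (n + 1) → α)) {k l m : α}
    (h : k + l = m) : slice A k + slice B l ⊆ slice (A + B) m := by
  intro z hz
  obtain ⟨x, hx, y, hy, rfl⟩ := mem_add.1 hz
  rw [mem_slice, ← h]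
  have hcons : (Fin.cons k x : Fin (n + 1) → α) + Fin.cons l y = Fin.cons (k + l) (x + y) :=
    Matrix.cons_add_cons k x l y
  exact hcons ▸ add_mem_add (mem_slice.1 hx) (mem_slice.1 hy)

theorem forall_mem_slice_apply {P : α → Prop} {A : Finset (Fin (n + 1) → α)}
    (hA : ∀ x ∈ A, ∀ i, P (x i)) (k : α) : ∀ x ∈ slice A k, ∀ i, P (x i) :=
  fun x hx i => by simpa using hA _ (mem_slice.1 hx) i.succ

theorem card_slice_add_le_card_add (A B : Finset (Fin (n + 1) → ℤ)) :
    #(slice A 0 + slice B 0) + max #(slice A 0 + slice B 1) #(slice A 1 + slice B 0)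
      + #(slice A 1 + slice B 1) ≤ #(A + B) :=
  calc _ ≤ ∑ k ∈ {0, 1, 2}, #(slice (A + B) k) := by
        rw [sum_insert (by decide), sum_pair (by decide), ← add_assoc]
        gcongr
        · exact slice_add_slice_subset A B (zero_add 0)
        · exact max_le (card_le_card (slice_add_slice_subset A B (zero_add 1)))
            (card_le_card (slice_add_slice_subset A B (add_zero 1)))
        · exact slice_add_slice_subset A B one_add_one_eq_two
    _ ≤ #(A + B) := sum_card_slice_le _ _

theorem card_add_eq_card_mul_card [DecidableEq α] [Add α] [Subsingleton α]
    (A B : Finset α) : #(A + B) = #A * #B :=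
  card_add_iff.2 (Set.subsingleton_of_subsingleton.injOn _)

end Slices

end HypercubeSumset

open Finset HypercubeSumset in
theorem stmt_11 (n : ℕ) (A B : Finset (Fin n → ℤ))
    (hA : ∀ x ∈ A, ∀ i, x i = 0 ∨ x i = 1)
    (hB : ∀ x ∈ B, ∀ i, x i = 0 ∨ x i = 1) :
    ((A.card : ℝ) * (B.card : ℝ)) ^ (Real.log 3 / Real.log 4) ≤ ((A + B).card : ℝ) := by
  have hc : (4 : ℝ) ^ (Real.log 3 / Real.log 4) = 3 :=
    Real.rpow_logb (by norm_num) (by norm_num) (by norm_num)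
  obtain ⟨hc0, hc1⟩ := pos_and_le_one_of_four_rpow_eq_three hc
  induction n with
  | zero =>
    rw [← Nat.cast_mul, ← card_add_eq_card_mul_card]
    exact natCast_rpow_le_self hc0 hc1 _
  | succ n ih =>
    rw [card_eq_card_slice_add_card_slice zero_ne_one fun x hx => hA x hx 0,
      card_eq_card_slice_add_card_slice zero_ne_one fun x hx => hB x hx 0]
    push_cast
    have hA' := forall_mem_slice_apply (P := fun z => z = 0 ∨ z = 1) hA
    have hB' := forall_mem_slice_apply (P := fun z => z = 0 ∨ z = 1) hB
    calc _ ≤ _ := add_mul_add_rpow_le_add_max_add hc (by positivity) (by positivity)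
          (by positivity) (by positivity)
      _ ≤ (#(slice A 0 + slice B 0) : ℝ) + max (#(slice A 0 + slice B 1) : ℝ)
            #(slice A 1 + slice B 0) + #(slice A 1 + slice B 1) := by
        gcongr <;> exact ih _ _ (hA' _) (hB' _)
      _ ≤ #(A + B) := by exact_mod_cast card_slice_add_le_card_add A B
end

section
/- Let β = log 3 / log 4. For all nonnegative reals i₁, i₂, j₁, j₂: ((i₁+i₂)(j₁+j₂))^β ≤ (i₁j₁)^β + (i₂j₂)^β + max((i₁j₂)^β, (i₂j₁)^β). -/
/-!
Write `a = i₁ j₁`, `b = i₂ j₂` and `c ≥ d` for the two cross terms, so that `a b = c d` and,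
with `m = √(a b)`, `d ≤ m ≤ c`. Replacing `d` by `m`, and then `c` by `m` (by concavity of
`u ↦ u ^ β` the increment `(K + u) ^ β - u ^ β` decreases in `u`), reduces the claim to
`(√a + √b) ^ (2 β) ≤ a ^ β + b ^ β + (4 ^ β - 2) (√(a b)) ^ β`, where `4 ^ β - 2 = 1`.

This two-variable inequality holds for every exponent `p = 2 β ∈ [1, 2]`: after scaling it says
that `((1 + σ) ^ p - 1 - σ ^ p) / σ ^ (p / 2)` is at most its value `2 ^ p - 2` at `σ = 1`, and this
ratio increases on `(0, 1]` because its derivative has the sign of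
`1 - σ ^ p - (1 - σ) (1 + σ) ^ (p - 1)`, which is nonnegative by Bernoulli's inequality and the
weighted AM-GM inequality.
-/

open Real Set

lemma one_sub_mul_one_add_rpow_le {p σ : ℝ} (hp₁ : 1 ≤ p) (hp₂ : p ≤ 2) (hσ₀ : 0 ≤ σ)
    (hσ₁ : σ ≤ 1) : (1 - σ) * (1 + σ) ^ (p - 1) ≤ 1 - σ ^ p := by
  have bernoulli : (1 + σ) ^ (p - 1) ≤ 1 + (p - 1) * σ :=
    rpow_one_add_le_one_add_mul_self (by linarith) (by linarith) (by linarith)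
  have amgm : σ ^ p ≤ (2 - p) * σ + (p - 1) * σ ^ 2 := by
    calc σ ^ p = σ ^ (2 - p) * (σ ^ 2) ^ (p - 1) := by
          rw [← rpow_natCast, ← rpow_mul hσ₀, ← rpow_add' hσ₀ (by push_cast; linarith)]
          push_cast; ring_nf
      _ ≤ (2 - p) * σ + (p - 1) * σ ^ 2 :=
          geom_mean_le_arith_mean2_weighted (by linarith) (by linarith) hσ₀ (sq_nonneg σ)
            (by ring)
  nlinarith [mul_le_mul_of_nonneg_left bernoulli (sub_nonneg.2 hσ₁)]

lemma monotoneOn_one_add_rpow_sub_mul_rpow_neg {p : ℝ} (hp₁ : 1 ≤ p) (hp₂ : p ≤ 2) :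
    MonotoneOn (fun σ : ℝ ↦ ((1 + σ) ^ p - 1 - σ ^ p) * σ ^ (-(p / 2))) (Ioc 0 1) := by
  have hderiv : ∀ σ : ℝ, 0 < σ → HasDerivAt (fun σ : ℝ ↦ ((1 + σ) ^ p - 1 - σ ^ p) * σ ^ (-(p / 2)))
      ((p * (1 + σ) ^ (p - 1) - p * σ ^ (p - 1)) * σ ^ (-(p / 2)) +
        ((1 + σ) ^ p - 1 - σ ^ p) * (-(p / 2) * σ ^ (-(p / 2) - 1))) σ := by
    intro σ hσ
    have hN := ((((hasDerivAt_id' σ).const_add 1).rpow_const (p := p)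
      (Or.inl (by linarith))).sub_const 1).sub (hasDerivAt_rpow_const (p := p) (Or.inl hσ.ne'))
    simp only [one_mul] at hN
    exact hN.mul (hasDerivAt_rpow_const (Or.inl hσ.ne'))
  refine monotoneOn_of_hasDerivWithinAt_nonneg (convex_Ioc 0 1)
    (fun σ hσ ↦ (hderiv σ hσ.1).continuousAt.continuousWithinAt)
    (fun σ hσ ↦ (hderiv σ (interior_subset hσ).1).hasDerivWithinAt) ?_
  intro σ hσ
  rw [interior_Ioc] at hσ
  obtain ⟨hσ₀, hσ₁⟩ := hσ
  have hsign := one_sub_mul_one_add_rpow_le hp₁ hp₂ hσ₀.le hσ₁.le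
  have e₁ : σ ^ (-(p / 2)) = σ * σ ^ (-(p / 2) - 1) := by
    rw [rpow_sub_one hσ₀.ne']; field_simp
  have e₂ : σ ^ p = σ * σ ^ (p - 1) := by
    rw [rpow_sub_one hσ₀.ne']; field_simp
  have e₃ : (1 + σ) ^ p = (1 + σ) * (1 + σ) ^ (p - 1) := by
    rw [rpow_sub_one (by linarith)]; field_simp
  have hC : 0 ≤ σ ^ (-(p / 2) - 1) := rpow_nonneg hσ₀.le _
  rw [e₂] at hsign
  rw [e₁, e₂, e₃]
  calc 0 ≤ σ ^ (-(p / 2) - 1) * (p / 2 * ((1 - σ * σ ^ (p - 1)) - (1 - σ) * (1 + σ) ^ (p - 1))) :=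
        mul_nonneg hC (mul_nonneg (by linarith) (by linarith))
    _ = _ := by ring

lemma one_add_rpow_le {p σ : ℝ} (hp₁ : 1 ≤ p) (hp₂ : p ≤ 2) (hσ₀ : 0 ≤ σ) (hσ₁ : σ ≤ 1) :
    (1 + σ) ^ p ≤ 1 + σ ^ p + (2 ^ p - 2) * σ ^ (p / 2) := by
  rcases hσ₀.eq_or_lt with rfl | hσ₀
  · simp [zero_rpow (by linarith : p ≠ 0), zero_rpow (by linarith : p / 2 ≠ 0)]
  have h := monotoneOn_one_add_rpow_sub_mul_rpow_neg hp₁ hp₂ ⟨hσ₀, hσ₁⟩ ⟨one_pos, le_rfl⟩ hσ₁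
  simp only [one_rpow, mul_one, one_add_one_eq_two] at h
  rw [rpow_neg hσ₀.le, ← div_eq_mul_inv,
    div_le_iff₀ (rpow_pos_of_pos hσ₀ _)] at h
  linarith

lemma add_rpow_le {p a b : ℝ} (hp₁ : 1 ≤ p) (hp₂ : p ≤ 2) (ha : 0 ≤ a) (hb : 0 ≤ b) :
    (a + b) ^ p ≤ a ^ p + b ^ p + (2 ^ p - 2) * (a * b) ^ (p / 2) := by
  wlog hab : a ≤ b generalizing a b
  · have := this hb ha (le_of_not_ge hab)
    rwa [add_comm b, add_comm (b ^ p), mul_comm b] at this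
  rcases hb.eq_or_lt with rfl | hb
  · obtain rfl : a = 0 := le_antisymm hab ha
    simp [zero_rpow (by linarith : p ≠ 0), zero_rpow (by linarith : p / 2 ≠ 0)]
  obtain ⟨σ, rfl⟩ : ∃ σ, a = σ * b := ⟨a / b, by field_simp⟩
  have hσ₀ : 0 ≤ σ := (mul_nonneg_iff_of_pos_right hb).1 ha
  have hσ₁ : σ ≤ 1 := (mul_le_iff_le_one_left hb).1 hab
  calc (σ * b + b) ^ p = (1 + σ) ^ p * b ^ p := by
        rw [← mul_rpow (by linarith) hb.le]; ring_nf
    _ ≤ (1 + σ ^ p + (2 ^ p - 2) * σ ^ (p / 2)) * b ^ p :=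
        mul_le_mul_of_nonneg_right (one_add_rpow_le hp₁ hp₂ hσ₀ hσ₁) (rpow_nonneg hb.le _)
    _ = (σ * b) ^ p + b ^ p + (2 ^ p - 2) * (σ * b * b) ^ (p / 2) := by
        rw [mul_assoc, mul_rpow hσ₀ (mul_nonneg hb.le hb.le), mul_rpow hσ₀ hb.le,
          mul_rpow hb.le hb.le, ← rpow_add hb, add_halves]
        ring

lemma antitoneOn_add_rpow_sub_rpow {β K : ℝ} (hβ₀ : 0 ≤ β) (hβ₁ : β ≤ 1) (hK : 0 ≤ K) :
    AntitoneOn (fun u : ℝ ↦ (K + u) ^ β - u ^ β) (Ici 0) := by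
  refine antitoneOn_of_hasDerivWithinAt_nonpos (convex_Ici 0)
    (f' := fun u ↦ β * (K + u) ^ (β - 1) - β * u ^ (β - 1)) ?_ ?_ ?_
  · exact (((continuous_const.add continuous_id).rpow_const fun _ ↦ Or.inr hβ₀).sub
      (continuous_id.rpow_const fun _ ↦ Or.inr hβ₀)).continuousOn
  · intro u hu
    rw [interior_Ici] at hu
    have h := (((hasDerivAt_id' u).const_add K).rpow_const (p := β)
      (Or.inl (by linarith [mem_Ioi.1 hu]))).sub (hasDerivAt_rpow_const (p := β) (Or.inl hu.ne'))
    simp only [one_mul] at h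
    exact h.hasDerivWithinAt
  · intro u hu
    rw [interior_Ici] at hu
    have : (K + u) ^ (β - 1) ≤ u ^ (β - 1) :=
      rpow_le_rpow_of_nonpos hu (by linarith) (by linarith)
    nlinarith

lemma add_add_add_rpow_le {β a b c d : ℝ} (hβ₁ : 1 / 2 ≤ β) (hβ₂ : β ≤ 1) (ha : 0 ≤ a)
    (hb : 0 ≤ b) (hc : 0 ≤ c) (hd : 0 ≤ d) (habcd : a * b = c * d) :
    (a + b + c + d) ^ β ≤ a ^ β + b ^ β + max (c ^ β) (d ^ β) + (4 ^ β - 3) * √(a * b) ^ β := by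
  wlog hdc : d ≤ c generalizing c d
  · have := this hd hc (by rw [habcd, mul_comm]) (le_of_not_ge hdc)
    rwa [add_right_comm _ d, max_comm] at this
  set m := √(a * b) with hm
  have hm₀ : 0 ≤ m := sqrt_nonneg _
  have hdm : d ≤ m := (le_sqrt hd (by positivity)).2 (by nlinarith)
  have hmc : m ≤ c := (sqrt_le_left hc).2 (by nlinarith)
  have rpow_two_mul : ∀ x : ℝ, 0 ≤ x → x ^ (2 * β) = (x ^ 2) ^ β := fun x hx ↦ by
    rw [rpow_mul hx, rpow_two]
  have two_var := add_rpow_le (p := 2 * β) (by linarith) (by linarith) (sqrt_nonneg a)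
    (sqrt_nonneg b)
  rw [rpow_two_mul _ (by positivity), rpow_two_mul _ (sqrt_nonneg a),
    rpow_two_mul _ (sqrt_nonneg b), rpow_two_mul _ zero_le_two, sq_sqrt ha, sq_sqrt hb,
    show (2 : ℝ) ^ 2 = 4 by norm_num,
    ← sqrt_mul ha, mul_div_cancel_left₀ _ two_ne_zero, add_sq, sq_sqrt ha, sq_sqrt hb,
    mul_assoc, ← sqrt_mul ha, ← hm] at two_var
  have concave_step := antitoneOn_add_rpow_sub_rpow (by linarith) hβ₂
    (by positivity : 0 ≤ a + b + m) hm₀ (hm₀.trans hmc) hmc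
  calc (a + b + c + d) ^ β ≤ (a + b + m + c) ^ β :=
        rpow_le_rpow (by positivity) (by linarith) (by linarith)
    _ ≤ (a + b + m + m) ^ β - m ^ β + c ^ β := by simp only at concave_step; linarith
    _ ≤ a ^ β + b ^ β + c ^ β + (4 ^ β - 3) * m ^ β := by
        rw [show a + b + m + m = a + 2 * m + b by ring]
        linarith
    _ ≤ a ^ β + b ^ β + max (c ^ β) (d ^ β) + (4 ^ β - 3) * m ^ β := by
        gcongr; exact le_max_left _ _

theorem stmt_12 (i₁ i₂ j₁ j₂ : ℝ) (h1 : 0 ≤ i₁) (h2 : 0 ≤ i₂)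
    (h3 : 0 ≤ j₁) (h4 : 0 ≤ j₂) :
    ((i₁ + i₂) * (j₁ + j₂)) ^ (Real.log 3 / Real.log 4) ≤
      (i₁ * j₁) ^ (Real.log 3 / Real.log 4) + (i₂ * j₂) ^ (Real.log 3 / Real.log 4) +
        max ((i₁ * j₂) ^ (Real.log 3 / Real.log 4))
          ((i₂ * j₁) ^ (Real.log 3 / Real.log 4)) := by
  have four_rpow : (4 : ℝ) ^ (Real.log 3 / Real.log 4) = 3 :=
    rpow_logb (by norm_num) (by norm_num) (by norm_num)
  have hlog4 : 0 < Real.log 4 := log_pos (by norm_num)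
  have half_le : 1 / 2 ≤ Real.log 3 / Real.log 4 := by
    rw [le_div_iff₀ hlog4, show (4 : ℝ) = 2 ^ 2 by norm_num, Real.log_pow]
    have : Real.log 2 ≤ Real.log 3 := log_le_log (by norm_num) (by norm_num)
    push_cast; linarith
  have le_one : Real.log 3 / Real.log 4 ≤ 1 :=
    (div_le_one hlog4).2 (log_le_log (by norm_num) (by norm_num))
  have h := add_add_add_rpow_le half_le le_one (mul_nonneg h1 h3) (mul_nonneg h2 h4)
    (mul_nonneg h1 h4) (mul_nonneg h2 h3) (by ring)
  rw [four_rpow, sub_self, zero_mul, add_zero] at h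
  convert h using 2
  ring
end

section
/- For all real t ≥ 1 and r ≥ 1, with β = log 3 / log 4, it holds that t^β + t^{-β} + r^β ≥ (t + 1/t + r + 1/r)^β. -/
open Real Set

-- L1 : 2 log a ≤ a - 1/a for a ≥ 1
lemma aux_log_le (a : ℝ) (ha : 1 ≤ a) : 2 * Real.log a ≤ a - 1/a := by
  have ha0 : (0:ℝ) < a := lt_of_lt_of_le one_pos ha
  have hs := Real.sinh_log ha0
  rcases eq_or_lt_of_le ha with h1 | h1
  · simp [← h1]
  · have hu : 0 < Real.log a := Real.log_pos h1
    have h2 : Real.log a < Real.sinh (Real.log a) := Real.self_lt_sinh_iff.2 hu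
    rw [hs] at h2
    rw [one_div]
    linarith

-- L2 : exp x ≤ 1 + x + x² on [0,1]
lemma aux_exp_le (x : ℝ) (h0 : 0 ≤ x) (h1 : x ≤ 1) : Real.exp x ≤ 1 + x + x^2 := by
  have h := Real.exp_bound' h0 h1 (n := 4) (by norm_num)
  have hsum : (∑ m ∈ Finset.range 4, x ^ m / m.factorial) = 1 + x + x^2/2 + x^3/6 := by
    simp [Finset.sum_range_succ, Nat.factorial]
  rw [hsum] at h
  norm_num [Nat.factorial] at h
  have hx3 : x^3 ≤ x^2 := by nlinarith
  have hx4 : x^4 ≤ x^2 := by nlinarith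
  nlinarith

-- Key: (1 - 1/a²) (a + 1/a + 1)^δ ≥ a^δ - a^(-(δ+2)) for a ≥ 1, δ ≥ 0
lemma aux_key (δ a : ℝ) (hδ : 0 ≤ δ) (ha : 1 ≤ a) :
    a ^ δ - a ^ (-(δ + 2)) ≤ (1 - 1/(a*a)) * (a + 1/a + 1) ^ δ := by
  have ha0 : (0:ℝ) < a := lt_of_lt_of_le one_pos ha
  set x : ℝ := 1/a with hxdef
  have hx0 : 0 < x := by positivity
  have hx1 : x ≤ 1 := by rw [hxdef]; rw [div_le_one ha0]; exact ha
  have hxa : x * a = 1 := by rw [hxdef]; field_simp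
  set M : ℝ := 1 + x + x*x with hMdef
  have hM0 : (0:ℝ) < M := by positivity
  set u : ℝ := Real.log a with hudef
  set c : ℝ := Real.log M with hcdef
  have hu0 : 0 ≤ u := Real.log_nonneg ha
  -- c ≥ x
  have hc : x ≤ c := by
    have h2 : Real.exp x ≤ M := by
      have := aux_exp_le x hx0.le hx1
      rw [hMdef]; nlinarith
    calc x = Real.log (Real.exp x) := (Real.log_exp x).symm
      _ ≤ c := Real.log_le_log (Real.exp_pos x) h2
  -- K : 2 x² u ≤ (1 - x²) c
  have hK : 2 * (x*x) * u ≤ (1 - x*x) * c := by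
    have l1 : 2 * u ≤ a - x := by
      have := aux_log_le a ha
      rw [hudef]; linarith
    have l2 : 2 * (x*x) * u ≤ x * (1 - x*x) := by nlinarith
    have l3 : x * (1 - x*x) ≤ c * (1 - x*x) := by nlinarith
    nlinarith
  -- decomposition of powers
  have hS : a + 1/a + 1 = a * M := by rw [hMdef, hxdef]; field_simp; ring
  have hsplit : (a + 1/a + 1) ^ δ = a ^ δ * M ^ δ := by
    rw [hS, Real.mul_rpow ha0.le hM0.le]
  have hMδ : 1 + δ * c ≤ M ^ δ := by
    rw [Real.rpow_def_of_pos hM0]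
    have := Real.add_one_le_exp (c * δ)
    rw [hcdef] at this ⊢
    nlinarith
  have hE : 1 - 2*δ*u ≤ Real.exp (u * (-(2*δ))) := by
    have := Real.add_one_le_exp (u * (-(2*δ)))
    nlinarith
  have ha2 : a ^ ((-2 : ℝ)) = x * x := by
    rw [Real.rpow_neg ha0.le, hxdef]
    rw [show ((2:ℝ)) = ((2:ℕ):ℝ) by norm_num, Real.rpow_natCast]
    field_simp
  have hF1 : a ^ (-(δ + 2)) = a ^ δ * ((x*x) * Real.exp (u * (-(2*δ)))) := by
    have h1 : a ^ (-(δ + 2)) = Real.exp (u * (-(δ+2))) := by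
      rw [Real.rpow_def_of_pos ha0, hudef]
    have h2 : a ^ δ = Real.exp (u * δ) := by rw [Real.rpow_def_of_pos ha0, hudef]
    have h3 : x * x = Real.exp (u * (-2)) := by rw [← ha2, Real.rpow_def_of_pos ha0, hudef]
    rw [h1, h2, h3, ← Real.exp_add, ← Real.exp_add]
    congr 1
    ring
  -- finish
  have haδ : (0:ℝ) ≤ a ^ δ := (Real.rpow_pos_of_pos ha0 δ).le
  rw [hF1, hsplit]
  have hxx1 : x * x ≤ 1 := by nlinarith
  have inner : 1 - (x*x) * Real.exp (u * (-(2*δ))) ≤ (1 - 1/(a*a)) * M ^ δ := by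
    have e1 : (x*x) * (1 - 2*δ*u) ≤ (x*x) * Real.exp (u * (-(2*δ))) :=
      mul_le_mul_of_nonneg_left hE (by positivity)
    have e2 : δ * (2 * (x*x) * u) ≤ δ * ((1 - x*x) * c) := mul_le_mul_of_nonneg_left hK hδ
    have e3 : (1 - x*x) * (1 + δ * c) ≤ (1 - x*x) * M ^ δ :=
      mul_le_mul_of_nonneg_left hMδ (by nlinarith)
    have hax : 1/(a*a) = x*x := by rw [hxdef]; field_simp
    rw [hax]
    nlinarith
  calc a ^ δ - a ^ δ * ((x*x) * Real.exp (u * (-(2*δ))))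
      = a ^ δ * (1 - (x*x) * Real.exp (u * (-(2*δ)))) := by ring
    _ ≤ a ^ δ * ((1 - 1/(a*a)) * M ^ δ) := mul_le_mul_of_nonneg_left inner haδ
    _ = (1 - 1/(a*a)) * (a ^ δ * M ^ δ) := by ring

-- Karamata-type step from convexity of rpow
lemma aux_step (γ : ℝ) (hγ : 1 ≤ γ) (C B : ℝ) (hC : 0 ≤ C) (hB : 1 ≤ B) :
    (C + 1) ^ γ + B ^ γ ≤ (C + B) ^ γ + 1 := by
  rcases eq_or_lt_of_le hC with h0 | h0
  · rw [← h0]; norm_num; linarith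
  have hden : 0 < C + B - 1 := by linarith
  set l : ℝ := (B - 1) / (C + B - 1) with hl
  set m : ℝ := C / (C + B - 1) with hm
  have hl0 : 0 ≤ l := div_nonneg (by linarith) hden.le
  have hm0 : 0 ≤ m := by positivity
  have hsum : l + m = 1 := by rw [hl, hm]; field_simp; ring
  have hcvx := convexOn_rpow hγ
  have h1 := hcvx.2 (mem_Ici.2 (by norm_num : (0:ℝ) ≤ 1))
    (mem_Ici.2 (by linarith : (0:ℝ) ≤ C + B)) hl0 hm0 hsum
  have h2 := hcvx.2 (mem_Ici.2 (by norm_num : (0:ℝ) ≤ 1))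
    (mem_Ici.2 (by linarith : (0:ℝ) ≤ C + B)) hm0 hl0 (by linarith)
  simp only [smul_eq_mul] at h1 h2
  have e1 : l * 1 + m * (C + B) = C + 1 := by rw [hl, hm]; field_simp; ring
  have e2 : m * 1 + l * (C + B) = B := by rw [hl, hm]; field_simp; ring
  rw [e1] at h1
  rw [e2] at h2
  simp only [Real.one_rpow] at h1 h2
  have hm1 : m = 1 - l := by linarith
  rw [hm1] at h1 h2
  nlinarith [h1, h2]

-- Monotonicity lemma for G
lemma aux_G (γ : ℝ) (hγ : 1 ≤ γ) (A : ℝ) (hA : 1 ≤ A) :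
    (3:ℝ) ^ γ - 2 + A ^ γ + A ^ (-γ) ≤ (A + 1/A + 1) ^ γ := by
  have hγ0 : (0:ℝ) ≤ γ := by linarith
  set G : ℝ → ℝ := fun a => (a + 1/a + 1) ^ γ - a ^ γ - a ^ (-γ) with hG
  have hd : ∀ a : ℝ, 0 < a → HasDerivAt G
      ((1 + -(a^2)⁻¹) * γ * (a + 1/a + 1) ^ (γ - 1)
        - γ * a ^ (γ - 1) - -γ * a ^ (-γ - 1)) a := by
    intro a ha0
    have hS0 : 0 < a + 1/a + 1 := by positivity
    have hu : HasDerivAt (fun y : ℝ => y + 1/y + 1) (1 + -(a^2)⁻¹) a := by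
      simpa [one_div] using ((hasDerivAt_id a).add (hasDerivAt_inv ha0.ne')).add_const 1
    have h1 : HasDerivAt (fun y : ℝ => (y + 1/y + 1) ^ γ)
        ((1 + -(a^2)⁻¹) * γ * (a + 1/a + 1) ^ (γ - 1)) a :=
      hu.rpow_const (Or.inl hS0.ne')
    have h2 : HasDerivAt (fun y : ℝ => y ^ γ) (γ * a ^ (γ - 1)) a :=
      Real.hasDerivAt_rpow_const (Or.inl ha0.ne')
    have h3 : HasDerivAt (fun y : ℝ => y ^ (-γ)) (-γ * a ^ (-γ - 1)) a :=
      Real.hasDerivAt_rpow_const (Or.inl ha0.ne')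
    exact (h1.sub h2).sub h3
  have hmono : MonotoneOn G (Ici 1) := by
    apply monotoneOn_of_deriv_nonneg (convex_Ici 1)
    · intro a haI
      exact (hd a (lt_of_lt_of_le one_pos haI)).differentiableAt.continuousAt.continuousWithinAt
    · intro a haI
      rw [interior_Ici] at haI
      exact ((hd a (lt_trans one_pos haI)).differentiableAt).differentiableWithinAt
    · intro a haI
      rw [interior_Ici] at haI
      have ha1 : (1:ℝ) ≤ a := le_of_lt haI
      have ha0 : (0:ℝ) < a := lt_of_lt_of_le one_pos ha1
      rw [(hd a ha0).deriv]
      have key := aux_key (γ - 1) a (by linarith) ha1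
      have hrw : a ^ (-(γ - 1 + 2)) = a ^ (-γ - 1) := by congr 1; ring
      rw [hrw] at key
      have h2 : ((a^2 : ℝ))⁻¹ = 1/(a*a) := by rw [sq]; ring
      rw [h2]
      nlinarith [mul_le_mul_of_nonneg_left key hγ0]
  have h1G : G 1 ≤ G A := hmono (mem_Ici.2 le_rfl) (mem_Ici.2 hA) hA
  have hG1 : G 1 = 3 ^ γ - 2 := by
    rw [hG]; norm_num [Real.one_rpow]; ring
  rw [hG1] at h1G
  simp only [hG] at h1G
  linarith

-- Main inequality in the γ = log 4 / log 3 world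
lemma aux_main (A B : ℝ) (hA : 1 ≤ A) (hB : 1 ≤ B) :
    A ^ (Real.log 4 / Real.log 3) + A ^ (-(Real.log 4 / Real.log 3))
      + B ^ (Real.log 4 / Real.log 3) + B ^ (-(Real.log 4 / Real.log 3))
      ≤ (A + 1/A + B) ^ (Real.log 4 / Real.log 3) := by
  set γ : ℝ := Real.log 4 / Real.log 3 with hγdef
  have l3 : (0:ℝ) < Real.log 3 := Real.log_pos (by norm_num)
  have l4 : (0:ℝ) < Real.log 4 := Real.log_pos (by norm_num)
  have hγ : 1 ≤ γ := by
    rw [hγdef, le_div_iff₀ l3]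
    have : Real.log 3 ≤ Real.log 4 := Real.log_le_log (by norm_num) (by norm_num)
    linarith
  have h34 : (3:ℝ) ^ γ = 4 := by
    rw [Real.rpow_def_of_pos (by norm_num : (0:ℝ) < 3), hγdef]
    rw [show Real.log 3 * (Real.log 4 / Real.log 3) = Real.log 4 by field_simp]
    exact Real.exp_log (by norm_num)
  have hC : (0:ℝ) ≤ A + 1/A := by positivity
  have step := aux_step γ hγ (A + 1/A) B hC hB
  have hGA := aux_G γ hγ A hA
  rw [h34] at hGA
  have hBneg : B ^ (-γ) ≤ 1 :=
    Real.rpow_le_one_of_one_le_of_nonpos hB (by linarith)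
  have e : A + 1/A + 1 + B - 1 = A + 1/A + B := by ring
  linarith

theorem stmt_13 (t r : ℝ) (ht : 1 ≤ t) (hr : 1 ≤ r) :
    (t + 1 / t + r + 1 / r) ^ (Real.log 3 / Real.log 4) ≤
      t ^ (Real.log 3 / Real.log 4) + t ^ (-(Real.log 3 / Real.log 4)) +
        r ^ (Real.log 3 / Real.log 4) := by
  have l3 : (0:ℝ) < Real.log 3 := Real.log_pos (by norm_num)
  have l4 : (0:ℝ) < Real.log 4 := Real.log_pos (by norm_num)
  set β : ℝ := Real.log 3 / Real.log 4 with hβdef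
  have ht0 : (0:ℝ) < t := lt_of_lt_of_le one_pos ht
  have hr0 : (0:ℝ) < r := lt_of_lt_of_le one_pos hr
  have hβ0 : 0 < β := by rw [hβdef]; positivity
  have hβγ : β * (Real.log 4 / Real.log 3) = 1 := by rw [hβdef]; field_simp
  set A : ℝ := t ^ β with hA
  set B : ℝ := r ^ β with hB
  have hA1 : 1 ≤ A := Real.one_le_rpow ht hβ0.le
  have hB1 : 1 ≤ B := Real.one_le_rpow hr hβ0.le
  have hA0 : 0 < A := Real.rpow_pos_of_pos ht0 β
  have hB0 : 0 < B := Real.rpow_pos_of_pos hr0 β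
  have idA : A ^ (Real.log 4 / Real.log 3) = t := by
    rw [hA, ← Real.rpow_mul ht0.le, hβγ, Real.rpow_one]
  have idB : B ^ (Real.log 4 / Real.log 3) = r := by
    rw [hB, ← Real.rpow_mul hr0.le, hβγ, Real.rpow_one]
  have idA' : A ^ (-(Real.log 4 / Real.log 3)) = 1/t := by
    rw [Real.rpow_neg hA0.le, idA, one_div]
  have idB' : B ^ (-(Real.log 4 / Real.log 3)) = 1/r := by
    rw [Real.rpow_neg hB0.le, idB, one_div]
  have hm := aux_main A B hA1 hB1
  rw [idA, idB, idA', idB'] at hm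
  have hX0 : (0:ℝ) ≤ A + 1/A + B := by positivity
  have final : (t + 1/t + r + 1/r) ^ β ≤ ((A + 1/A + B) ^ (Real.log 4 / Real.log 3)) ^ β :=
    Real.rpow_le_rpow (by positivity) hm hβ0.le
  rw [← Real.rpow_mul hX0, mul_comm, hβγ, Real.rpow_one] at final
  have htneg : t ^ (-β) = 1/A := by rw [Real.rpow_neg ht0.le, hA, one_div]
  rw [htneg]
  exact final
end

section
/- Let γ : ℤ → ℝ≥0 have finite nonempty support S, and define f(p) = Σ_{n∈S} γ(n)^p for p ∈ [0,1]. If Σ_{n∈S} γ(n) log γ(n) < 0 (γ is spartan), then inf_{0<p<1} f(p) = Σ_{n∈S} γ(n). If Σ_{n∈S} log γ(n) > 0 (γ is opulent), then inf_{0<p<1} f(p) = |S|. -/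
/-!
Both claims come from the tangent lines of `p ↦ x ^ p = exp (p log x)` at `p = 0` and `p = 1`.
Since `exp` lies above its tangent, `x ^ p ≥ 1 + p log x` and `x ^ p ≥ x + (p - 1) x log x`.
Summing over the support, an opulent `γ` gives `Σ γ(n)^p ≥ |S|` and a spartan `γ` gives
`Σ γ(n)^p ≥ Σ γ(n)` for every `p ∈ (0, 1)`. These lower bounds are the values of the continuous
function `p ↦ Σ γ(n)^p` at the endpoints `0` and `1` of the interval, so they are its infimum.
-/

open Finset Set Filter Topology

theorem csInf_image_eq_of_continuousWithinAt {α β : Type*} [TopologicalSpace α]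
    [ConditionallyCompleteLattice β] [TopologicalSpace β] [ClosedIciTopology β]
    {f : α → β} {s : Set α} {x : α} (hx : x ∈ closure s) (hf : ContinuousWithinAt f s x)
    (hle : ∀ y ∈ s, f x ≤ f y) :
    sInf (f '' s) = f x := by
  have : (𝓝[s] x).NeBot := mem_closure_iff_nhdsWithin_neBot.mp hx
  refine IsGLB.csInf_eq ⟨?_, fun c hc => ?_⟩ ((closure_nonempty_iff.mp ⟨x, hx⟩).image f)
  · rintro _ ⟨y, hy, rfl⟩
    exact hle y hy
  · exact ge_of_tendsto hf (eventually_mem_nhdsWithin.mono fun y hy => hc ⟨y, hy, rfl⟩)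

namespace Real

theorem one_add_mul_log_le_rpow {x : ℝ} (hx : 0 < x) (p : ℝ) : 1 + p * log x ≤ x ^ p := by
  rw [rpow_def_of_pos hx, mul_comm]
  linarith [add_one_le_exp (log x * p)]

theorem add_mul_mul_log_le_rpow {x : ℝ} (hx : 0 < x) (p : ℝ) :
    x + (p - 1) * (x * log x) ≤ x ^ p := by
  calc x + (p - 1) * (x * log x) = x * (1 + (p - 1) * log x) := by ring
    _ ≤ x * x ^ (p - 1) := by gcongr; exact one_add_mul_log_le_rpow hx _
    _ = x ^ p := by rw [rpow_sub_one hx.ne', mul_div_cancel₀ _ hx.ne']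

end Real

section SumRpow

variable {ι : Type*} {s : Finset ι} {w : ι → ℝ}

theorem card_le_sum_rpow (hw : ∀ i ∈ s, 0 < w i) (hlog : 0 ≤ ∑ i ∈ s, Real.log (w i))
    {p : ℝ} (hp : 0 ≤ p) :
    (#s : ℝ) ≤ ∑ i ∈ s, w i ^ p :=
  calc (#s : ℝ) ≤ #s + p * ∑ i ∈ s, Real.log (w i) := le_add_of_nonneg_right (by positivity)
    _ = ∑ i ∈ s, (1 + p * Real.log (w i)) := by simp [sum_add_distrib, mul_sum]
    _ ≤ ∑ i ∈ s, w i ^ p := sum_le_sum fun i hi => Real.one_add_mul_log_le_rpow (hw i hi) p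

theorem sum_le_sum_rpow (hw : ∀ i ∈ s, 0 < w i) (hlog : ∑ i ∈ s, w i * Real.log (w i) ≤ 0)
    {p : ℝ} (hp : p ≤ 1) :
    ∑ i ∈ s, w i ≤ ∑ i ∈ s, w i ^ p :=
  calc ∑ i ∈ s, w i ≤ ∑ i ∈ s, w i + (p - 1) * ∑ i ∈ s, w i * Real.log (w i) :=
        le_add_of_nonneg_right (mul_nonneg_of_nonpos_of_nonpos (by linarith) hlog)
    _ = ∑ i ∈ s, (w i + (p - 1) * (w i * Real.log (w i))) := by rw [sum_add_distrib, mul_sum]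
    _ ≤ ∑ i ∈ s, w i ^ p := sum_le_sum fun i hi => Real.add_mul_mul_log_le_rpow (hw i hi) p

theorem continuous_sum_rpow (hw : ∀ i ∈ s, w i ≠ 0) :
    Continuous fun p : ℝ => ∑ i ∈ s, w i ^ p :=
  continuous_finsetSum s fun i hi => Real.continuous_const_rpow (hw i hi)

end SumRpow

theorem stmt_14_general (γ : ℤ → ℝ) (hpos : ∀ n, 0 ≤ γ n) (S : Finset ℤ)
    (hS : ∀ n, γ n ≠ 0 ↔ n ∈ S) :
    ((∑ n ∈ S, γ n * Real.log (γ n) < 0 →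
        sInf ((fun p => ∑ n ∈ S, γ n ^ p) '' Set.Ioo (0 : ℝ) 1) = ∑ n ∈ S, γ n) ∧
     (0 < ∑ n ∈ S, Real.log (γ n) →
        sInf ((fun p => ∑ n ∈ S, γ n ^ p) '' Set.Ioo (0 : ℝ) 1) = (S.card : ℝ))) := by
  have hγ : ∀ n ∈ S, 0 < γ n := fun n hn => (hpos n).lt_of_ne' ((hS n).mpr hn)
  have hcont := continuous_sum_rpow fun n hn => (hγ n hn).ne'
  have hclosure : Icc (0 : ℝ) 1 ⊆ closure (Ioo 0 1) := by rw [closure_Ioo zero_ne_one]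
  refine ⟨fun hspartan => ?_, fun hopulent => ?_⟩
  · have := csInf_image_eq_of_continuousWithinAt (hclosure (right_mem_Icc.mpr zero_le_one))
      hcont.continuousWithinAt fun p hp => ?_
    · simpa using this
    · simpa using sum_le_sum_rpow hγ hspartan.le hp.2.le
  · have := csInf_image_eq_of_continuousWithinAt (hclosure (left_mem_Icc.mpr zero_le_one))
      hcont.continuousWithinAt fun p hp => ?_
    · simpa using this
    · simpa using card_le_sum_rpow hγ hopulent.le hp.1.le

theorem stmt_14 (γ : ℤ → ℝ) (hpos : ∀ n, 0 ≤ γ n) (S : Finset ℤ)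
    (hS : ∀ n, γ n ≠ 0 ↔ n ∈ S) (hne : S.Nonempty) :
    ((∑ n ∈ S, γ n * Real.log (γ n) < 0 →
        sInf ((fun p => ∑ n ∈ S, γ n ^ p) '' Set.Ioo (0 : ℝ) 1) = ∑ n ∈ S, γ n) ∧
     (0 < ∑ n ∈ S, Real.log (γ n) →
        sInf ((fun p => ∑ n ∈ S, γ n ^ p) '' Set.Ioo (0 : ℝ) 1) = (S.card : ℝ))) :=
  stmt_14_general γ hpos S hS
end

section
/- Let γ : ℤ → ℝ≥0 have finite support S = {s₁, ..., s_N}, all values positive on S. Then inf_{0<p<1} Σ_i γ(s_i)^p equals the maximum over probability vectors (y₁,...,y_N) (y_i ≥ 0, Σ y_i = 1) of 2^{H(y₁,...,y_N)} · min(1, γ(s₁)^{y₁}···γ(s_N)^{y_N}), where H is the binary entropy H(y) = -Σ y_i log₂ y_i. -/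
/-!
Weighted AM-GM with weights `y` and terms `γ ^ p / y` is Gibbs' inequality
`2 ^ H(y) * (∏ γ ^ y) ^ p ≤ ∑ γ ^ p`; together with `min 1 P ≤ P ^ p` for `p ∈ [0, 1]` it bounds
every value by `F p = ∑ γ ^ p`, hence by `min_{[0,1]} F`, which by continuity is the infimum over
`(0, 1)`. At a minimizer `q` the weights `y ∝ γ ^ q` give equality in AM-GM, and since
`log ∏ γ ^ y = F'(q) / F(q)`, the first-order conditions at `q` force `∏ γ ^ y ≥ 1` if `q < 1`
and `≤ 1` if `q > 0`; hence `min 1 (∏ γ ^ y) = (∏ γ ^ y) ^ q` and the value is exactly `F q`.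
-/

open Finset Set

theorem IsMinOn.sub_mul_nonneg_of_hasDerivAt {f : ℝ → ℝ} {s : Set ℝ} {a b f' : ℝ}
    (h : IsMinOn f s a) (hf : HasDerivAt f f' a) (hs : segment ℝ a b ⊆ s) : 0 ≤ (b - a) * f' := by
  simpa [mul_comm] using h.localize.hasFDerivWithinAt_nonneg hf.hasFDerivAt.hasFDerivWithinAt
    (sub_mem_posTangentConeAt_of_segment_subset hs)

theorem ContinuousOn.sInf_image_Ioo_eq {f : ℝ → ℝ} {a b q : ℝ} (hab : a < b)
    (hf : ContinuousOn f (Icc a b)) (hq : IsMinOn f (Icc a b) q) (hqab : q ∈ Icc a b) :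
    sInf (f '' Ioo a b) = f q := by
  have hlower : f q ∈ lowerBounds (f '' Ioo a b) := by
    rintro _ ⟨p, hp, rfl⟩
    exact hq (Ioo_subset_Icc_self hp)
  have hclosure : f q ∈ closure (f '' Ioo a b) := by
    rw [← closure_Ioo hab.ne] at hf hqab
    exact hf.image_closure (mem_image_of_mem f hqab)
  exact (isGLB_of_mem_closure hlower hclosure).csInf_eq ((Set.nonempty_Ioo.2 hab).image f)

namespace Real

theorem two_rpow_mul_logb_self {x : ℝ} (hx : 0 ≤ x) : (2 : ℝ) ^ (x * logb 2 x) = x ^ x := by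
  rcases hx.eq_or_lt with rfl | hx
  · simp
  · rw [mul_comm, rpow_mul zero_le_two, rpow_logb two_pos (by norm_num) hx]

theorem min_one_le_rpow {x p : ℝ} (hx : 0 ≤ x) (hp : p ∈ Icc (0 : ℝ) 1) : min 1 x ≤ x ^ p := by
  rcases le_total x 1 with h | h
  · calc min 1 x = x ^ (1 : ℝ) := by rw [min_eq_right h, rpow_one]
      _ ≤ x ^ p := rpow_le_rpow_of_exponent_ge' hx h hp.1 hp.2
  · exact (min_le_left _ _).trans (one_le_rpow h hp.1)

theorem min_one_eq_rpow {x p : ℝ} (hp : p ∈ Icc (0 : ℝ) 1) (h1 : p < 1 → 1 ≤ x)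
    (h0 : 0 < p → x ≤ 1) : min 1 x = x ^ p := by
  rcases lt_trichotomy x 1 with hx | rfl | hx
  · obtain rfl : p = 1 := le_antisymm hp.2 (not_lt.1 fun h => (h1 h).not_gt hx)
    rw [min_eq_right hx.le, rpow_one]
  · simp
  · obtain rfl : p = 0 := le_antisymm (not_lt.1 fun h => (h0 h).not_gt hx) hp.1
    rw [min_eq_left hx.le, rpow_zero]

section Entropy

variable {ι : Type*} {s : Finset ι} {y a : ι → ℝ}

theorem two_rpow_neg_sum_mul_logb (hy : ∀ n ∈ s, 0 ≤ y n) :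
    (2 : ℝ) ^ (-∑ n ∈ s, y n * logb 2 (y n)) = (∏ n ∈ s, y n ^ y n)⁻¹ := by
  rw [rpow_neg zero_le_two, rpow_sum_of_pos two_pos]
  exact congrArg _ (prod_congr rfl fun n hn => two_rpow_mul_logb_self (hy n hn))

/-- Gibbs' inequality, in the form of weighted AM-GM applied to the ratios `a n / y n`. -/
theorem two_rpow_entropy_mul_prod_rpow_le_sum (hy : ∀ n ∈ s, 0 ≤ y n)
    (hy1 : ∑ n ∈ s, y n = 1) (ha : ∀ n ∈ s, 0 ≤ a n) :
    (2 : ℝ) ^ (-∑ n ∈ s, y n * logb 2 (y n)) * ∏ n ∈ s, a n ^ y n ≤ ∑ n ∈ s, a n := by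
  -- where `y n = 0` the junk value `a n / 0 = 0` is harmless: `0 ^ 0 = 1` and `0 * 0 ≤ a n`
  have amgm : ∏ n ∈ s, (a n / y n) ^ y n ≤ ∑ n ∈ s, y n * (a n / y n) :=
    geom_mean_le_arith_mean_weighted s y _ hy hy1 fun n hn => div_nonneg (ha n hn) (hy n hn)
  have hterm : ∀ n ∈ s, y n * (a n / y n) ≤ a n := fun n hn => by
    rcases (hy n hn).eq_or_lt with h | h
    · simp [← h, ha n hn]
    · rw [mul_div_cancel₀ _ h.ne']
  calc (2 : ℝ) ^ (-∑ n ∈ s, y n * logb 2 (y n)) * ∏ n ∈ s, a n ^ y n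
      = ∏ n ∈ s, (a n / y n) ^ y n := by
        rw [two_rpow_neg_sum_mul_logb hy, inv_mul_eq_div, ← prod_div_distrib]
        exact prod_congr rfl fun n hn => (div_rpow (ha n hn) (hy n hn) _).symm
    _ ≤ ∑ n ∈ s, y n * (a n / y n) := amgm
    _ ≤ ∑ n ∈ s, a n := sum_le_sum hterm

theorem two_rpow_entropy_mul_prod_rpow_eq_sum (hs : s.Nonempty) (ha : ∀ n ∈ s, 0 < a n)
    (hy : ∀ n ∈ s, y n = a n / ∑ m ∈ s, a m) :
    (2 : ℝ) ^ (-∑ n ∈ s, y n * logb 2 (y n)) * ∏ n ∈ s, a n ^ y n = ∑ n ∈ s, a n := by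
  have hA : 0 < ∑ n ∈ s, a n := sum_pos ha hs
  have hy0 : ∀ n ∈ s, 0 ≤ y n := fun n hn => hy n hn ▸ div_nonneg (ha n hn).le hA.le
  have hy1 : ∑ n ∈ s, y n = 1 := by
    rw [sum_congr rfl hy, ← sum_div, div_self hA.ne']
  rw [two_rpow_neg_sum_mul_logb hy0, inv_mul_eq_div, ← prod_div_distrib]
  calc ∏ n ∈ s, a n ^ y n / y n ^ y n = ∏ n ∈ s, (∑ m ∈ s, a m) ^ y n := by
        refine prod_congr rfl fun n hn => ?_
        rw [← div_rpow (ha n hn).le (hy0 n hn), hy n hn, div_div_cancel₀ (ha n hn).ne']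
    _ = ∑ n ∈ s, a n := by rw [← rpow_sum_of_pos hA, hy1, rpow_one]

theorem prod_rpow_rpow_comm (ha : ∀ n ∈ s, 0 ≤ a n) (p : ℝ) :
    (∏ n ∈ s, a n ^ y n) ^ p = ∏ n ∈ s, (a n ^ p) ^ y n := by
  rw [← finsetProd_rpow s _ fun n hn => rpow_nonneg (ha n hn) _]
  exact prod_congr rfl fun n hn => by rw [← rpow_mul (ha n hn), ← rpow_mul (ha n hn), mul_comm]

theorem two_rpow_entropy_mul_min_one_prod_rpow_le_sum_rpow (ha : ∀ n ∈ s, 0 ≤ a n)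
    (hy : ∀ n ∈ s, 0 ≤ y n) (hy1 : ∑ n ∈ s, y n = 1) {p : ℝ} (hp : p ∈ Icc (0 : ℝ) 1) :
    (2 : ℝ) ^ (-∑ n ∈ s, y n * logb 2 (y n)) * min 1 (∏ n ∈ s, a n ^ y n) ≤
      ∑ n ∈ s, a n ^ p :=
  calc _ ≤ (2 : ℝ) ^ (-∑ n ∈ s, y n * logb 2 (y n)) * (∏ n ∈ s, a n ^ y n) ^ p := by
        gcongr
        exact min_one_le_rpow (prod_nonneg fun n hn => rpow_nonneg (ha n hn) _) hp
    _ ≤ ∑ n ∈ s, a n ^ p := by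
        rw [prod_rpow_rpow_comm ha]
        exact two_rpow_entropy_mul_prod_rpow_le_sum hy hy1 fun n hn => rpow_nonneg (ha n hn) p

theorem hasDerivAt_sum_rpow (ha : ∀ n ∈ s, 0 < a n) (p : ℝ) :
    HasDerivAt (fun p => ∑ n ∈ s, a n ^ p) (∑ n ∈ s, a n ^ p * log (a n)) p :=
  HasDerivAt.fun_sum fun n hn => (hasStrictDerivAt_const_rpow (ha n hn) p).hasDerivAt

/-- `log ∏ a ^ y = F'(q) / F(q)` for `F p = ∑ a ^ p`, so the one-sided first-order conditions at
the minimizer `q` decide on which side of `1` the product lies. -/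
theorem min_one_prod_rpow_eq_rpow_of_isMinOn {q : ℝ} (hs : s.Nonempty) (ha : ∀ n ∈ s, 0 < a n)
    (hq : IsMinOn (fun p => ∑ n ∈ s, a n ^ p) (Icc 0 1) q) (hq01 : q ∈ Icc (0 : ℝ) 1)
    (hy : ∀ n ∈ s, y n = a n ^ q / ∑ m ∈ s, a m ^ q) :
    min 1 (∏ n ∈ s, a n ^ y n) = (∏ n ∈ s, a n ^ y n) ^ q := by
  set F := ∑ m ∈ s, a m ^ q
  set F' := ∑ n ∈ s, a n ^ q * log (a n)
  have hF : 0 < F := sum_pos (fun n hn => rpow_pos_of_pos (ha n hn) q) hs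
  have hP : 0 < ∏ n ∈ s, a n ^ y n := prod_pos fun n hn => rpow_pos_of_pos (ha n hn) _
  have hlog : log (∏ n ∈ s, a n ^ y n) = F' / F := by
    rw [log_prod fun n hn => (rpow_pos_of_pos (ha n hn) _).ne', sum_div]
    refine sum_congr rfl fun n hn => ?_
    rw [log_rpow (ha n hn), hy n hn]
    ring
  have hderiv := hasDerivAt_sum_rpow ha q
  have hright : 0 ≤ (1 - q) * F' := hq.sub_mul_nonneg_of_hasDerivAt hderiv <| by
    rw [segment_eq_Icc hq01.2]; exact Icc_subset_Icc hq01.1 le_rfl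
  have hleft : 0 ≤ (0 - q) * F' := hq.sub_mul_nonneg_of_hasDerivAt hderiv <| by
    rw [segment_symm, segment_eq_Icc hq01.1]; exact Icc_subset_Icc le_rfl hq01.2
  refine min_one_eq_rpow hq01 (fun h => ?_) (fun h => ?_)
  · rw [← log_nonneg_iff hP, hlog]
    exact div_nonneg (nonneg_of_mul_nonneg_right hright (by linarith)) hF.le
  · rw [← log_nonpos_iff hP.le, hlog]
    exact div_nonpos_of_nonpos_of_nonneg (by nlinarith) hF.le

end Entropy

end Real

theorem stmt_15 (γ : ℤ → ℝ) (hpos : ∀ n, 0 ≤ γ n) (S : Finset ℤ)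
    (hS : ∀ n, γ n ≠ 0 ↔ n ∈ S) (hne : S.Nonempty) :
    IsGreatest
      {v : ℝ | ∃ y : ℤ → ℝ, (∀ n, 0 ≤ y n) ∧ (∀ n ∉ S, y n = 0) ∧
        (∑ n ∈ S, y n = 1) ∧
        v = (2 : ℝ) ^ (-(∑ n ∈ S, y n * Real.logb 2 (y n))) *
              min 1 (∏ n ∈ S, γ n ^ y n)}
      (sInf ((fun p => ∑ n ∈ S, γ n ^ p) '' Set.Ioo (0 : ℝ) 1)) := by
  have hγ : ∀ n ∈ S, 0 < γ n := fun n hn => (hpos n).lt_of_ne ((hS n).2 hn).symm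
  set F : ℝ → ℝ := fun p => ∑ n ∈ S, γ n ^ p
  have hFcont : Continuous F := continuous_iff_continuousAt.2 fun p =>
    (Real.hasDerivAt_sum_rpow hγ p).continuousAt
  obtain ⟨q, hq01, hq⟩ := isCompact_Icc.exists_isMinOn (nonempty_Icc.2 zero_le_one)
    hFcont.continuousOn
  rw [hFcont.continuousOn.sInf_image_Ioo_eq zero_lt_one hq hq01]
  constructor
  · classical
    set y : ℤ → ℝ := fun n => if n ∈ S then γ n ^ q / F q else 0
    have hy : ∀ n ∈ S, y n = γ n ^ q / F q := fun n hn => if_pos hn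
    have hγq : ∀ n ∈ S, 0 < γ n ^ q := fun n hn => Real.rpow_pos_of_pos (hγ n hn) q
    refine ⟨y, fun n => ?_, fun n hn => if_neg hn, ?_, ?_⟩
    · by_cases hn : n ∈ S
      · exact hy n hn ▸ div_nonneg (hγq n hn).le (sum_pos hγq hne).le
      · exact (if_neg hn).ge
    · rw [sum_congr rfl hy, ← sum_div, div_self (sum_pos hγq hne).ne']
    · rw [Real.min_one_prod_rpow_eq_rpow_of_isMinOn hne hγ hq hq01 hy,
        Real.prod_rpow_rpow_comm (fun n hn => (hγ n hn).le)]
      exact (Real.two_rpow_entropy_mul_prod_rpow_eq_sum hne hγq hy).symm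
  · rintro _ ⟨y, hy0, -, hy1, rfl⟩
    exact Real.two_rpow_entropy_mul_min_one_prod_rpow_le_sum_rpow (fun n hn => (hγ n hn).le)
      (fun n _ => hy0 n) hy1 hq01
end

section
/- Let X be a random variable that is a finite sum of independent Bernoulli random variables. Then P(X > 0) ≥ E[X] - (E[X])²/2. -/
/-! Since the `Z i` are `{0,1}`-valued, `X` takes values in `ℕ`, and for `n ∈ ℕ` one has
`1{n > 0} ≥ n - n (n - 1) / 2` (the first Bonferroni inequality), so
`P(X > 0) ≥ E[X] - E[X (X - 1)] / 2`. Because `Z i ^ 2 = Z i`, `X (X - 1)` is the sum of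
`Z i Z j` over ordered pairs `i ≠ j`, whose expectation is `∑_{i ≠ j} E[Z i] E[Z j] ≤ (E[X])²` by
independence. -/

open MeasureTheory ProbabilityTheory

namespace Finset

variable {ι R : Type*}

lemma exists_nat_eq_sum_of_forall_eq_zero_or_eq_one [Semiring R] {S : Finset ι} {f : ι → R}
    (hf : ∀ i ∈ S, f i = 0 ∨ f i = 1) : ∃ n : ℕ, ∑ i ∈ S, f i = n := by
  classical
  refine ⟨#{i ∈ S | f i = 1}, ?_⟩
  rw [← sum_boole]
  refine sum_congr rfl fun i hi => ?_
  rcases hf i hi with h | h <;> simp [h]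

lemma sum_mul_sum_sub_one_eq_sum_sum_erase [CommRing R] [DecidableEq ι] {S : Finset ι}
    {f : ι → R} (hf : ∀ i ∈ S, f i * f i = f i) :
    (∑ i ∈ S, f i) * (∑ i ∈ S, f i - 1) = ∑ i ∈ S, ∑ j ∈ S.erase i, f i * f j := by
  have hrow : ∀ i ∈ S, f i * ∑ j ∈ S, f j = f i + ∑ j ∈ S.erase i, f i * f j :=
    fun i hi => by rw [mul_sum, ← add_sum_erase _ _ hi, hf i hi]
  rw [mul_sub, mul_one, sum_mul, sum_congr rfl hrow, sum_add_distrib, add_sub_cancel_left]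

end Finset

lemma sub_mul_sub_one_div_two_le_ite_pos {x : ℝ} (hx : ∃ n : ℕ, x = n) :
    x - x * (x - 1) / 2 ≤ if 0 < x then 1 else 0 := by
  obtain ⟨n, rfl⟩ := hx
  rcases n with _ | _ | n
  · simp
  · norm_num
  · have hpos : (0 : ℝ) < (n + 2 : ℕ) := by positivity
    rw [if_pos hpos]
    push_cast
    nlinarith

section Probability

variable {Ω : Type*} [MeasurableSpace Ω] {μ : Measure Ω}

lemma integrable_of_forall_eq_zero_or_eq_one [IsFiniteMeasure μ] {f : Ω → ℝ}
    (hf : Measurable f) (h01 : ∀ ω, f ω = 0 ∨ f ω = 1) : Integrable f μ :=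
  .of_bound hf.aestronglyMeasurable 1 <| ae_of_all _ fun ω => by
    rcases h01 ω with h | h <;> simp [h]

lemma integral_sub_half_integral_mul_sub_one_le_measureReal_pos [IsFiniteMeasure μ]
    {X : Ω → ℝ} (hX : Measurable X) (hnat : ∀ ω, ∃ n : ℕ, X ω = n) (hint : Integrable X μ)
    (hint₂ : Integrable (fun ω => X ω * (X ω - 1)) μ) :
    μ[X] - (∫ ω, X ω * (X ω - 1) ∂μ) / 2 ≤ μ.real {ω | 0 < X ω} := by
  have hset : MeasurableSet {ω | 0 < X ω} := measurableSet_lt measurable_const hX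
  calc μ[X] - (∫ ω, X ω * (X ω - 1) ∂μ) / 2
      = ∫ ω, X ω - X ω * (X ω - 1) / 2 ∂μ := by
        rw [integral_sub hint (hint₂.div_const 2), integral_div]
    _ ≤ ∫ ω, {ω | 0 < X ω}.indicator 1 ω ∂μ := by
        refine integral_mono (hint.sub (hint₂.div_const 2))
          ((integrable_const 1).indicator hset) fun ω => ?_
        simpa [Set.indicator_apply] using sub_mul_sub_one_div_two_le_ite_pos (hnat ω)
    _ = μ.real {ω | 0 < X ω} := by
        simp [integral_indicator_one hset]

variable {ι : Type*} [DecidableEq ι] {S : Finset ι} {Z : ι → Ω → ℝ}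

lemma integrable_and_integral_sum_mul_sum_sub_one_le_sq [IsFiniteMeasure μ]
    (hmeas : ∀ i ∈ S, Measurable (Z i))
    (h01 : ∀ i ∈ S, ∀ ω, Z i ω = 0 ∨ Z i ω = 1)
    (hind : ∀ i ∈ S, ∀ j ∈ S, i ≠ j → IndepFun (Z i) (Z j) μ) :
    Integrable (fun ω => (∑ i ∈ S, Z i ω) * (∑ i ∈ S, Z i ω - 1)) μ ∧
      ∫ ω, (∑ i ∈ S, Z i ω) * (∑ i ∈ S, Z i ω - 1) ∂μ ≤ (∫ ω, ∑ i ∈ S, Z i ω ∂μ) ^ 2 := by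
  have hint : ∀ i ∈ S, Integrable (Z i) μ := fun i hi =>
    integrable_of_forall_eq_zero_or_eq_one (hmeas i hi) (h01 i hi)
  have hint₂ : ∀ i ∈ S, ∀ j ∈ S, Integrable (fun ω => Z i ω * Z j ω) μ := fun i hi j hj =>
    integrable_of_forall_eq_zero_or_eq_one ((hmeas i hi).mul (hmeas j hj)) fun ω => by
      rcases h01 i hi ω with h | h <;> rcases h01 j hj ω with h' | h' <;> simp [h, h']
  have hoffDiag : (fun ω => (∑ i ∈ S, Z i ω) * (∑ i ∈ S, Z i ω - 1)) =
      fun ω => ∑ i ∈ S, ∑ j ∈ S.erase i, Z i ω * Z j ω := funext fun ω =>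
    Finset.sum_mul_sum_sub_one_eq_sum_sum_erase fun i hi => by
      rcases h01 i hi ω with h | h <;> simp [h]
  have hintRow : ∀ i ∈ S, Integrable (fun ω => ∑ j ∈ S.erase i, Z i ω * Z j ω) μ :=
    fun i hi => integrable_finsetSum _ fun j hj => hint₂ i hi j (Finset.mem_of_mem_erase hj)
  rw [hoffDiag]
  refine ⟨integrable_finsetSum _ hintRow, ?_⟩
  have hpair : ∀ i ∈ S, ∀ j ∈ S.erase i, ∫ ω, Z i ω * Z j ω ∂μ = μ[Z i] * μ[Z j] :=
    fun i hi j hj => (hind i hi j (Finset.mem_of_mem_erase hj) (Finset.ne_of_mem_erase hj).symm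
      ).integral_fun_mul_eq_mul_integral (hmeas i hi).aestronglyMeasurable
        (hmeas j (Finset.mem_of_mem_erase hj)).aestronglyMeasurable
  have hmean_nonneg : ∀ i ∈ S, 0 ≤ μ[Z i] := fun i hi =>
    integral_nonneg fun ω => by rcases h01 i hi ω with h | h <;> simp [h]
  calc ∫ ω, ∑ i ∈ S, ∑ j ∈ S.erase i, Z i ω * Z j ω ∂μ
      = ∑ i ∈ S, ∑ j ∈ S.erase i, μ[Z i] * μ[Z j] := by
        rw [integral_finsetSum _ hintRow]
        refine Finset.sum_congr rfl fun i hi => ?_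
        rw [integral_finsetSum _ fun j hj => hint₂ i hi j (Finset.mem_of_mem_erase hj)]
        exact Finset.sum_congr rfl (hpair i hi)
    _ ≤ ∑ i ∈ S, ∑ j ∈ S, μ[Z i] * μ[Z j] :=
        Finset.sum_le_sum fun i hi => Finset.sum_le_sum_of_subset_of_nonneg
          (Finset.erase_subset i S) fun j hj _ =>
            mul_nonneg (hmean_nonneg i hi) (hmean_nonneg j hj)
    _ = (∫ ω, ∑ i ∈ S, Z i ω ∂μ) ^ 2 := by
        rw [integral_finsetSum _ hint, sq, Finset.sum_mul_sum]

end Probability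

theorem stmt_16 {Ω : Type*} [MeasurableSpace Ω] (μ : Measure Ω)
    [IsProbabilityMeasure μ] {ι : Type*} (S : Finset ι) (Z : ι → Ω → ℝ)
    (hmeas : ∀ i, Measurable (Z i))
    (hBer : ∀ i ∈ S, ∀ ω, Z i ω = 0 ∨ Z i ω = 1)
    (hind : iIndepFun Z μ) :
    (∫ ω, (∑ i ∈ S, Z i ω) ∂μ) - (∫ ω, (∑ i ∈ S, Z i ω) ∂μ) ^ 2 / 2 ≤
      (μ {ω | 0 < ∑ i ∈ S, Z i ω}).toReal := by
  classical
  obtain ⟨hint₂, hmoment⟩ := integrable_and_integral_sum_mul_sum_sub_one_le_sq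
    (fun i _ => hmeas i) hBer fun _ _ _ _ hij => hind.indepFun hij
  have hbonferroni := integral_sub_half_integral_mul_sub_one_le_measureReal_pos
    (Finset.measurable_sum S fun i _ => hmeas i)
    (fun ω => Finset.exists_nat_eq_sum_of_forall_eq_zero_or_eq_one fun i hi => hBer i hi ω)
    (integrable_finsetSum S fun i hi =>
      integrable_of_forall_eq_zero_or_eq_one (hmeas i) (hBer i hi))
    hint₂
  rw [← measureReal_def]
  linarith
end
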